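/- arXiv:math/9912208 — 5 statements merged into one kernel-verified Lean document; each statement's English description precedes it below -/
import Mathlib

section
/- For a 2×n matrix t = (t_{ij}) with nonzero entries, define Δ_k(t) = Σ_{j=0}^{k-1} (t_{11}···t_{1(k-1-j)})·(t_{2(k-j)}···t_{2k}) for k = 1,...,n (with Δ_1(t) = 1), and η(t) = (t_{11}···t_{1n} − t_{21}···t_{2n})/Δ_n(t). Define τ(t) by the conditions τ(t)_{1j}·τ(t)_{2j} = t_{1j}·t_{2j} for all j and τ(t)_{21}···τ(t)_{2k} = t_{21}···t_{2k} + Δ_k(t)·η(t) for all k = 1,...,n. Then τ swaps the row products: τ(t)_{21}···τ(t)_{2n} = t_{11}···t_{1n} and τ(t)_{11}···τ(t)_{1n} = t_{21}···t_{2n}. -/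
open Finset

namespace TwoRow

variable {K : Type*} [Field K]

/-- Partial product `t_1 ⋯ t_k` of a row (rows are indexed `1, …, n`). -/
noncomputable def Ppart (t : ℕ → K) (k : ℕ) : K := ∏ l ∈ Icc 1 k, t l

/-- `Δ_k(t) = ∑_{i=1}^{k} t_{11}⋯t_{1(i-1)} · t_{2(i+1)}⋯t_{2k}` (so `Δ_1 = 1`). -/
noncomputable def Delta (t1 t2 : ℕ → K) (k : ℕ) : K :=
  ∑ i ∈ Icc 1 k, Ppart t1 (i - 1) * ∏ l ∈ Icc (i + 1) k, t2 l

/-- `η(t) = (t_{11}⋯t_{1n} − t_{21}⋯t_{2n}) / Δ_n(t)`. -/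
noncomputable def eta (t1 t2 : ℕ → K) (n : ℕ) : K :=
  (Ppart t1 n - Ppart t2 n) / Delta t1 t2 n

/-- `s2 k = τ(t)_{21}⋯τ(t)_{2k} = t_{21}⋯t_{2k} + Δ_k(t)·η(t)`. -/
noncomputable def s2 (t1 t2 : ℕ → K) (n k : ℕ) : K :=
  Ppart t2 k + Delta t1 t2 k * eta t1 t2 n

/-- Second row of `τ(t)`: `τ(t)_{2k}` is the ratio of consecutive partial products. -/
noncomputable def tauRow2 (t1 t2 : ℕ → K) (n k : ℕ) : K :=
  s2 t1 t2 n k / s2 t1 t2 n (k - 1)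

/-- First row of `τ(t)`, determined by the column-product condition
`τ(t)_{1k}·τ(t)_{2k} = t_{1k}·t_{2k}`. -/
noncomputable def tauRow1 (t1 t2 : ℕ → K) (n k : ℕ) : K :=
  t1 k * t2 k / tauRow2 t1 t2 n k

end TwoRow


lemma telescope {K : Type*} [Field K] (f : ℕ → K) :
    ∀ n : ℕ, (∀ k ≤ n, f k ≠ 0) → ∏ k ∈ Icc 1 n, f k / f (k - 1) = f n / f 0 := by
  intro n
  induction n with
  | zero => intro h; simp [div_self (h 0 le_rfl)]
  | succ m ih =>
    intro h
    rw [Finset.prod_Icc_succ_top (Nat.le_add_left 1 m), ih (fun k hk => h k (hk.trans (Nat.le_succ m)))]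
    have hm : f m ≠ 0 := h m (Nat.le_succ m)
    have h0 : f 0 ≠ 0 := h 0 (Nat.zero_le _)
    field_simp
    rw [show m + 1 - 1 = m by omega]
    field_simp

open TwoRow

/-- `τ` swaps the row products: `τ(t)_{21}⋯τ(t)_{2n} = t_{11}⋯t_{1n}` and
`τ(t)_{11}⋯τ(t)_{1n} = t_{21}⋯t_{2n}`. -/
theorem stmt4 {K : Type*} [Field K] [CharZero K] (n : ℕ) (hn : 1 ≤ n) (t1 t2 : ℕ → K)
    (h1 : ∀ k ∈ Icc 1 n, t1 k ≠ 0) (h2 : ∀ k ∈ Icc 1 n, t2 k ≠ 0)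
    (hΔ : Delta t1 t2 n ≠ 0) (hs : ∀ k ≤ n, s2 t1 t2 n k ≠ 0) :
    (∏ k ∈ Icc 1 n, tauRow2 t1 t2 n k = Ppart t1 n) ∧
    (∏ k ∈ Icc 1 n, tauRow1 t1 t2 n k = Ppart t2 n) := by
  have hs0 : s2 t1 t2 n 0 = 1 := by
    simp [s2, Delta, Ppart]
  have hsn : s2 t1 t2 n n = Ppart t1 n := by
    simp only [s2, eta]
    field_simp
    ring
  have hprod2 : ∏ k ∈ Icc 1 n, tauRow2 t1 t2 n k = Ppart t1 n := by
    have := telescope (s2 t1 t2 n) n hs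
    simp only [tauRow2]
    rw [this, hs0, hsn, div_one]
  refine ⟨hprod2, ?_⟩
  have hnz : ∀ k ∈ Icc 1 n, tauRow2 t1 t2 n k ≠ 0 := by
    intro k hk
    simp only [tauRow2]
    have hk' := Finset.mem_Icc.mp hk
    exact div_ne_zero (hs k hk'.2) (hs (k-1) ((Nat.sub_le k 1).trans hk'.2))
  have : ∏ k ∈ Icc 1 n, tauRow1 t1 t2 n k
      = (∏ k ∈ Icc 1 n, t1 k * t2 k) / ∏ k ∈ Icc 1 n, tauRow2 t1 t2 n k := by
    simp only [tauRow1]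
    rw [Finset.prod_div_distrib]
  rw [this, hprod2, Finset.prod_mul_distrib]
  have hP1 : Ppart t1 n ≠ 0 := hsn ▸ hs n le_rfl
  rw [show (∏ k ∈ Icc 1 n, t1 k) = Ppart t1 n from rfl,
      show (∏ k ∈ Icc 1 n, t2 k) = Ppart t2 n from rfl]
  field_simp
end

section
/- The map τ on 2×n matrices with nonzero entries defined by τ(t)_{1j}·τ(t)_{2j} = t_{1j}·t_{2j} and τ(t)_{21}···τ(t)_{2k} = t_{21}···t_{2k} + Δ_k(t)·η(t) (with Δ_k, η as defined) is an involution: τ(τ(t)) = t on the open dense set where both applications are defined. -/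
open Finset

namespace TwoRow

variable {K : Type*} [Field K]

lemma Ppart_zero (t : ℕ → K) : Ppart t 0 = 1 := by simp [Ppart]

lemma Ppart_succ (t : ℕ → K) (k : ℕ) : Ppart t (k+1) = Ppart t k * t (k+1) := by
  unfold Ppart
  rw [Finset.prod_Icc_succ_top (by omega)]

lemma Ppart_ne_zero {t : ℕ → K} {n k : ℕ} (hk : k ≤ n) (h : ∀ j ∈ Icc 1 n, t j ≠ 0) :
    Ppart t k ≠ 0 :=
  Finset.prod_ne_zero_iff.2 fun j hj => h j (by simp only [mem_Icc] at hj ⊢; omega)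

lemma Delta_zero (t1 t2 : ℕ → K) : Delta t1 t2 0 = 0 := by simp [Delta]

lemma Delta_succ (t1 t2 : ℕ → K) (k : ℕ) :
    Delta t1 t2 (k+1) = t2 (k+1) * Delta t1 t2 k + Ppart t1 k := by
  unfold Delta
  rw [Finset.sum_Icc_succ_top (by omega)]
  have h1 : (∏ l ∈ Icc (k+1+1) (k+1), t2 l) = 1 := by
    rw [Finset.Icc_eq_empty (by omega), Finset.prod_empty]
  rw [h1, mul_one]
  simp only [Nat.add_sub_cancel]
  congr 1
  rw [Finset.mul_sum]
  apply Finset.sum_congr rfl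
  intro i hi
  simp only [Finset.mem_Icc] at hi
  rw [Finset.prod_Icc_succ_top (by omega)]
  ring

lemma s2_zero (t1 t2 : ℕ → K) (n : ℕ) : s2 t1 t2 n 0 = 1 := by
  simp [s2, Ppart_zero, Delta_zero]

lemma key (t1 t2 : ℕ → K) (n k : ℕ) :
    Delta t1 t2 (k+1) * s2 t1 t2 n k =
      s2 t1 t2 n (k+1) * Delta t1 t2 k + Ppart t1 k * Ppart t2 k := by
  simp only [s2, Ppart_succ, Delta_succ]; ring

lemma tau_facts {t1 t2 : ℕ → K} {n : ℕ}
    (hs : ∀ k ≤ n, s2 t1 t2 n k ≠ 0) :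
    ∀ k ≤ n,
      Ppart (tauRow2 t1 t2 n) k = s2 t1 t2 n k ∧
      Ppart (tauRow1 t1 t2 n) k = Ppart t1 k * Ppart t2 k / s2 t1 t2 n k ∧
      Delta (tauRow1 t1 t2 n) (tauRow2 t1 t2 n) k = Delta t1 t2 k := by
  intro k
  induction k with
  | zero => intro _; simp [Ppart_zero, Delta_zero, s2_zero]
  | succ k ih =>
    intro hk1
    have hk : k ≤ n := by omega
    obtain ⟨e2, e1, ed⟩ := ih hk
    have hsk := hs k hk
    have hsk1 := hs (k+1) hk1
    have ht2 : tauRow2 t1 t2 n (k+1) = s2 t1 t2 n (k+1) / s2 t1 t2 n k := by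
      simp [tauRow2]
    refine ⟨?_, ?_, ?_⟩
    · rw [Ppart_succ, e2, ht2]
      field_simp
    · rw [Ppart_succ, e1, tauRow1, ht2, Ppart_succ t1, Ppart_succ t2]
      field_simp
    · rw [Delta_succ, ed, e1, ht2]
      have hkey := key t1 t2 n k
      field_simp
      linear_combination - hkey

end TwoRow

open TwoRow

/-- `τ` is an involution: `τ(τ(t)) = t` on the open dense set where both applications
are defined. -/
theorem stmt5 {K : Type*} [Field K] [CharZero K] (n : ℕ) (hn : 1 ≤ n) (t1 t2 : ℕ → K)
    (h1 : ∀ k ∈ Icc 1 n, t1 k ≠ 0) (h2 : ∀ k ∈ Icc 1 n, t2 k ≠ 0)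
    (hΔ : Delta t1 t2 n ≠ 0) (hs : ∀ k ≤ n, s2 t1 t2 n k ≠ 0)
    (hΔ' : Delta (tauRow1 t1 t2 n) (tauRow2 t1 t2 n) n ≠ 0)
    (hs' : ∀ k ≤ n, s2 (tauRow1 t1 t2 n) (tauRow2 t1 t2 n) n k ≠ 0) :
    ∀ k ∈ Icc 1 n,
      tauRow1 (tauRow1 t1 t2 n) (tauRow2 t1 t2 n) n k = t1 k ∧
      tauRow2 (tauRow1 t1 t2 n) (tauRow2 t1 t2 n) n k = t2 k := by
  set T1 := tauRow1 t1 t2 n with hT1def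
  set T2 := tauRow2 t1 t2 n with hT2def
  have hP1n : Ppart t1 n ≠ 0 := Ppart_ne_zero le_rfl h1
  have hSn : s2 t1 t2 n n = Ppart t1 n := by
    unfold s2 eta; field_simp
    ring
  have heta' : eta T1 T2 n = - eta t1 t2 n := by
    obtain ⟨e2, e1, ed⟩ := tau_facts hs n le_rfl
    unfold eta
    rw [e1, e2, ed, hSn]
    field_simp
    ring
  have hs2' : ∀ k ≤ n, s2 T1 T2 n k = Ppart t2 k := by
    intro k hk
    obtain ⟨e2, e1, ed⟩ := tau_facts hs k hk
    unfold s2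
    rw [e2, ed, heta']
    unfold s2
    ring
  intro k hk
  rw [mem_Icc] at hk
  obtain ⟨j, rfl⟩ : ∃ j, k = j + 1 := ⟨k - 1, by omega⟩
  have hj : j ≤ n := by omega
  have hP2j : Ppart t2 j ≠ 0 := Ppart_ne_zero hj h2
  have ht2k : t2 (j + 1) ≠ 0 := h2 _ (mem_Icc.2 ⟨by omega, hk.2⟩)
  have hT2k : T2 (j + 1) = s2 t1 t2 n (j + 1) / s2 t1 t2 n j := by
    rw [hT2def]; unfold tauRow2; simp
  have hT2ne : T2 (j + 1) ≠ 0 := by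
    rw [hT2k]; exact div_ne_zero (hs _ hk.2) (hs _ hj)
  have htau2 : tauRow2 T1 T2 n (j + 1) = t2 (j + 1) := by
    unfold tauRow2
    simp only [Nat.add_sub_cancel]
    rw [hs2' _ hk.2, hs2' _ hj, Ppart_succ]
    exact mul_div_cancel_left₀ _ hP2j
  refine ⟨?_, htau2⟩
  unfold tauRow1
  rw [htau2, hT1def]
  show tauRow1 t1 t2 n (j + 1) * T2 (j + 1) / t2 (j + 1) = t1 (j + 1)
  unfold tauRow1
  rw [← hT2def]
  field_simp
end

section
/- Let g ∈ GL_2(K) (K an algebraically closed field) be regular (i.e. its centralizer has minimal dimension; for 2×2 this means g is not a scalar matrix). Let B^g denote the set of Borel subgroups of GL_2 containing g. Then the centralizer of g in PGL_2(K) acts simply transitively on the set B \ B^g of Borel subgroups NOT containing g, where B ≅ P^1(K) is the set of all Borel subgroups. -/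
open Module

lemma aux13 {K : Type*} [Field K]
    (g : (Fin 2 → K) ≃ₗ[K] (Fin 2 → K))
    (L : Submodule K (Fin 2 → K))
    (hL : Module.finrank K L = 1)
    (hLe : L.map (g : (Fin 2 → K) →ₗ[K] (Fin 2 → K)) ≠ L) :
    ∃ v : Fin 2 → K, v ≠ 0 ∧ L = Submodule.span K {v} ∧
      LinearIndependent K ![v, g v] := by
  obtain ⟨v, hvL, hv0, hspan⟩ := (rank_submodule_eq_one_iff L).mp
    (rank_eq_one_iff_finrank_eq_one.mpr hL)
  have hLs : L = Submodule.span K {v} :=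
    le_antisymm hspan ((Submodule.span_singleton_le_iff_mem v L).mpr hvL)
  have hgv : g v ∉ L := by
    intro hmem
    apply hLe
    have hle : L.map (g : (Fin 2 → K) →ₗ[K] (Fin 2 → K)) ≤ L := by
      rintro x ⟨y, hy, rfl⟩
      rw [SetLike.mem_coe, hLs, Submodule.mem_span_singleton] at hy
      obtain ⟨c, rfl⟩ := hy
      simpa using Submodule.smul_mem L c hmem
    have : FiniteDimensional K (Fin 2 → K) := by infer_instance
    refine Submodule.eq_of_le_of_finrank_eq hle ?_
    rw [LinearEquiv.finrank_map_eq]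
  refine ⟨v, hv0, hLs, ?_⟩
  rw [linearIndependent_fin2]
  constructor
  · show g v ≠ 0
    intro h
    exact hv0 (by simpa using congrArg g.symm h)
  · show ∀ a : K, a • g v ≠ v
    intro a ha
    rcases eq_or_ne a 0 with rfl | ha0
    · simp at ha; exact hv0 ha.symm
    · apply hgv
      rw [hLs, Submodule.mem_span_singleton]
      refine ⟨a⁻¹, ?_⟩
      nth_rewrite 1 [← ha]
      rw [smul_smul, inv_mul_cancel₀ ha0, one_smul]

/-- For a regular (non-scalar) `g ∈ GL_2(K)`, `K` algebraically closed, the centralizer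
of `g` in `PGL_2(K)` acts simply transitively on the set of Borel subgroups (= lines in
`K²`) not containing `g` (= non-eigenlines of `g`): for every pair of non-eigenlines
`L, L'` there is an element of `GL_2(K)` commuting with `g` taking `L` to `L'`, unique
up to scalar. -/
theorem stmt13 {K : Type*} [Field K] [IsAlgClosed K]
    (g : (Fin 2 → K) ≃ₗ[K] (Fin 2 → K))
    (hreg : ¬ ∃ c : K, ∀ v, g v = c • v)
    (L L' : Submodule K (Fin 2 → K))
    (hL : Module.finrank K L = 1) (hL' : Module.finrank K L' = 1)
    (hLe : L.map (g : (Fin 2 → K) →ₗ[K] (Fin 2 → K)) ≠ L)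
    (hL'e : L'.map (g : (Fin 2 → K) →ₗ[K] (Fin 2 → K)) ≠ L') :
    ∃ h : (Fin 2 → K) ≃ₗ[K] (Fin 2 → K),
      (∀ v, h (g v) = g (h v)) ∧
      L.map (h : (Fin 2 → K) →ₗ[K] (Fin 2 → K)) = L' ∧
      ∀ h₂ : (Fin 2 → K) ≃ₗ[K] (Fin 2 → K),
        (∀ v, h₂ (g v) = g (h₂ v)) →
        L.map (h₂ : (Fin 2 → K) →ₗ[K] (Fin 2 → K)) = L' →
        ∃ c : K, c ≠ 0 ∧ ∀ v, h₂ v = c • h v := by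
  obtain ⟨v, hv0, hLs, hli⟩ := aux13 g L hL hLe
  obtain ⟨v', hv'0, hL's, hli'⟩ := aux13 g L' hL' hL'e
  have card_eq : Fintype.card (Fin 2) = Module.finrank K (Fin 2 → K) := by
    simp [Module.finrank_fin_fun]
  let b : Basis (Fin 2) K (Fin 2 → K) := basisOfLinearIndependentOfCardEqFinrank hli card_eq
  let b' : Basis (Fin 2) K (Fin 2 → K) := basisOfLinearIndependentOfCardEqFinrank hli' card_eq
  have hb0 : b 0 = v := by simp [b, coe_basisOfLinearIndependentOfCardEqFinrank]
  have hb1 : b 1 = g v := by simp [b, coe_basisOfLinearIndependentOfCardEqFinrank]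
  have hb'0 : b' 0 = v' := by simp [b', coe_basisOfLinearIndependentOfCardEqFinrank]
  have hb'1 : b' 1 = g v' := by simp [b', coe_basisOfLinearIndependentOfCardEqFinrank]
  set α := b.repr (g (g v)) 0 with hα
  set β := b.repr (g (g v)) 1 with hβ
  have hkey0 : g (g v) = α • v + β • g v := by
    have := b.sum_repr (g (g v))
    rw [Fin.sum_univ_two, hb0, hb1] at this
    exact this.symm
  -- Cayley–Hamilton-style identity, valid for all w since it holds on the basis
  have hkey : ∀ w, g (g w) = α • w + β • g w := by
    have heq : ((g : (Fin 2 → K) →ₗ[K] (Fin 2 → K)) ∘ₗ (g : (Fin 2 → K) →ₗ[K] (Fin 2 → K)))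
        = α • LinearMap.id + β • (g : (Fin 2 → K) →ₗ[K] (Fin 2 → K)) := by
      refine Basis.ext b fun i => ?_
      fin_cases i <;> simp only [Fin.mk_zero, Fin.mk_one]
      · simp only [LinearMap.comp_apply, LinearMap.add_apply, LinearMap.smul_apply,
          LinearMap.id_apply, LinearEquiv.coe_coe, hb0]
        exact hkey0
      · simp only [LinearMap.comp_apply, LinearMap.add_apply, LinearMap.smul_apply,
          LinearMap.id_apply, LinearEquiv.coe_coe, hb1]
        simpa using congrArg g hkey0
    intro w
    have := congrArg (fun f => f w) heq
    simpa using this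
  let h : (Fin 2 → K) ≃ₗ[K] (Fin 2 → K) := b.equiv b' (Equiv.refl _)
  have hhv : h v = v' := by
    rw [← hb0, ← hb'0]; exact b.equiv_apply 0 b' (Equiv.refl _)
  have hhgv : h (g v) = g v' := by
    rw [← hb1, ← hb'1]; exact b.equiv_apply 1 b' (Equiv.refl _)
  have hcomm : ∀ w, h (g w) = g (h w) := by
    have heq : ((h : (Fin 2 → K) →ₗ[K] (Fin 2 → K)) ∘ₗ (g : (Fin 2 → K) →ₗ[K] (Fin 2 → K)))
        = ((g : (Fin 2 → K) →ₗ[K] (Fin 2 → K)) ∘ₗ (h : (Fin 2 → K) →ₗ[K] (Fin 2 → K))) := by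
      refine Basis.ext b fun i => ?_
      fin_cases i <;> simp only [Fin.mk_zero, Fin.mk_one]
      · simp only [LinearMap.comp_apply, LinearEquiv.coe_coe, hb0]
        rw [hhgv, hhv]
      · simp only [LinearMap.comp_apply, LinearEquiv.coe_coe, hb1]
        rw [hkey0, map_add, map_smul, map_smul, hhv, hhgv]
        exact (hkey v').symm
    intro w
    have := congrArg (fun f => f w) heq
    simpa using this
  have hmap : L.map (h : (Fin 2 → K) →ₗ[K] (Fin 2 → K)) = L' := by
    rw [hLs, hL's, Submodule.map_span, Set.image_singleton]
    congr 1
    rw [Set.singleton_eq_singleton_iff]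
    exact hhv
  refine ⟨h, hcomm, hmap, ?_⟩
  intro h₂ hc2 hm2
  have hv2 : h₂ v ∈ L' := by
    rw [← hm2]
    exact Submodule.mem_map_of_mem (by rw [hLs]; exact Submodule.mem_span_singleton_self v)
  rw [hL's, Submodule.mem_span_singleton] at hv2
  obtain ⟨c, hc⟩ := hv2
  have hc0 : c ≠ 0 := by
    rintro rfl
    simp only [zero_smul] at hc
    exact hv0 (by simpa using congrArg h₂.symm hc.symm)
  refine ⟨c, hc0, ?_⟩
  have heq : (h₂ : (Fin 2 → K) →ₗ[K] (Fin 2 → K))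
      = c • (h : (Fin 2 → K) →ₗ[K] (Fin 2 → K)) := by
    refine Basis.ext b fun i => ?_
    fin_cases i <;> simp only [Fin.mk_zero, Fin.mk_one]
    · simp only [LinearMap.smul_apply, LinearEquiv.coe_coe, hb0, hhv]
      exact hc.symm
    · simp only [LinearMap.smul_apply, LinearEquiv.coe_coe, hb1, hhgv]
      rw [hc2, ← hc, map_smul]
  intro w
  have := congrArg (fun f => f w) heq
  simpa using this
end

section
/- For g ∈ GL_n(K) regular semisimple with distinct eigenvalues, the map π: {(B, g) : B Borel containing g} → {g} has fiber of cardinality n! (the Weyl group of GL_n); more generally, the Grothendieck–Springer map π: G̃ → G, where G̃ = {(B, g) : g ∈ B}, restricted over the regular semisimple locus G_rs, is a Galois covering with group S_n: the fiber over a regular semisimple g is a torsor over S_n via the identification of Borels containing g with orderings of the eigenlines of g. -/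
open Submodule

section aux
variable {K : Type*} [Field K] {n : ℕ}
  {f : (Fin n → K) →ₗ[K] (Fin n → K)}
  {μ : Fin n → K}
  (b : Module.Basis (Fin n) K (Fin n → K))

lemma repr_apply_f (hb : ∀ i, f (b i) = μ i • b i) (v : Fin n → K) (k : Fin n) :
    b.repr (f v) k = μ k * b.repr v k := by
  have h : (Finsupp.lapply k ∘ₗ ((b.repr : (Fin n → K) →ₗ[K] (Fin n →₀ K)) ∘ₗ f))
      = μ k • (Finsupp.lapply k ∘ₗ (b.repr : (Fin n → K) →ₗ[K] (Fin n →₀ K))) := by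
    apply b.ext
    intro i
    simp only [LinearMap.comp_apply, LinearMap.smul_apply, hb i, map_smul,
      Module.Basis.repr_self, Finsupp.lapply_apply, Finsupp.smul_apply, Finsupp.single_apply,
      smul_eq_mul]
    rcases eq_or_ne i k with rfl | hik
    · simp [mul_comm]
    · simp [hik]
  simpa using LinearMap.congr_fun h v

lemma stable_basis_mem (hμ : Function.Injective μ) (hb : ∀ i, f (b i) = μ i • b i)
    (W : Submodule K (Fin n → K)) (hW : W.map f ≤ W) :
    ∀ v ∈ W, ∀ i ∈ (b.repr v).support, b i ∈ W := by
  suffices h : ∀ s : ℕ, ∀ v ∈ W, (b.repr v).support.card ≤ s →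
      ∀ i ∈ (b.repr v).support, b i ∈ W by
    intro v hv i hi; exact h _ v hv le_rfl i hi
  intro s
  induction s with
  | zero =>
    intro v hv hcard i hi
    rw [Nat.le_zero, Finset.card_eq_zero] at hcard
    simp [hcard] at hi
  | succ s ih =>
    intro v hv hcard i hi
    by_cases hsing : (b.repr v).support = {i}
    · obtain ⟨hc, hv'⟩ := Finsupp.support_eq_singleton.mp hsing
      have : v = b.repr v i • b i := by
        conv_lhs => rw [← b.linearCombination_repr v, hv']
        simp
      have h2 : b i = (b.repr v i)⁻¹ • v := by
        rw [eq_comm, inv_smul_eq_iff₀ hc]; exact this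
      rw [h2]
      exact W.smul_mem _ hv
    · obtain ⟨j, hj, hji⟩ : ∃ j ∈ (b.repr v).support, j ≠ i := by
      
        by_contra hcon
        push_neg at hcon
        exact hsing (Finset.eq_singleton_iff_unique_mem.mpr ⟨hi, hcon⟩)
      set w := f v - μ j • v with hwdef
      have hw : w ∈ W := sub_mem (hW ⟨v, hv, rfl⟩) (W.smul_mem _ hv)
      have hrw : ∀ k, b.repr w k = (μ k - μ j) * b.repr v k := by
        intro k
        simp [hwdef, map_sub, map_smul, repr_apply_f b hb, sub_mul]
      have hsupp : (b.repr w).support ⊆ (b.repr v).support.erase j := by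
        intro k hk
        rw [Finsupp.mem_support_iff, hrw] at hk
        rcases mul_ne_zero_iff.mp hk with ⟨h1, h2⟩
        refine Finset.mem_erase.mpr ⟨?_, Finsupp.mem_support_iff.mpr h2⟩
        intro hkj; exact h1 (by rw [hkj, sub_self])
      have hcard' : (b.repr w).support.card ≤ s := by
        have h1 := Finset.card_le_card hsupp
        have h2 := Finset.card_erase_of_mem hj
        omega
      have hi' : i ∈ (b.repr w).support := by
        rw [Finsupp.mem_support_iff, hrw]
        exact mul_ne_zero (sub_ne_zero.mpr fun h => hji (hμ h).symm)
          (Finsupp.mem_support_iff.mp hi)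
      exact ih w hw hcard' i hi'

end aux

section aux2
variable {K : Type*} [Field K] {n : ℕ}
  {f : (Fin n → K) →ₗ[K] (Fin n → K)}
  {μ : Fin n → K}
  (b : Module.Basis (Fin n) K (Fin n → K))

lemma finrank_spanFinset (T : Finset (Fin n)) :
    Module.finrank K (span K (b '' ↑T)) = T.card := by
  classical
  have li : LinearIndependent K ((↑) : (b '' ↑T) → (Fin n → K)) := by
    have h := (b.linearIndependent.comp ((↑) : (↑T : Set (Fin n)) → Fin n)
      Subtype.val_injective).linearIndepOn_id
    rwa [Set.range_comp, Subtype.range_coe] at h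
  have : Fintype (b '' (↑T : Set (Fin n))) := Set.Finite.fintype (T.finite_toSet.image b)
  rw [finrank_span_set_eq_card li, Set.toFinset_image, Finset.toFinset_coe,
    Finset.card_image_of_injective _ b.injective]

lemma map_spanFinset_le (hb : ∀ i, f (b i) = μ i • b i) (T : Finset (Fin n)) :
    (span K (b '' ↑T)).map f ≤ span K (b '' ↑T) := by
  rw [Submodule.map_span, span_le]
  rintro _ ⟨_, ⟨k, hk, rfl⟩, rfl⟩
  rw [hb k]
  exact Submodule.smul_mem _ _ (subset_span (Set.mem_image_of_mem b hk))

lemma stable_eq_span (hμ : Function.Injective μ) (hb : ∀ i, f (b i) = μ i • b i)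
    (W : Submodule K (Fin n → K)) (hW : W.map f ≤ W) :
    W = span K (b '' {k | b k ∈ W}) := by
  refine le_antisymm ?_ (span_le.mpr ?_)
  · intro v hv
    rw [b.mem_span_image]
    intro k hk
    exact stable_basis_mem b hμ hb W hW v hv k hk
  · rintro _ ⟨k, hk, rfl⟩; exact hk

end aux2

/-- For a regular semisimple endomorphism `f` of `K^n` (i.e. `f` is diagonalizable with
`n` distinct eigenvalues), the number of complete flags stable under `f` — the fiber of
the Grothendieck–Springer map over `f` — is exactly `n! = |S_n|`. -/
theorem stmt14 {K : Type*} [Field K] (n : ℕ)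
    (f : (Fin n → K) →ₗ[K] (Fin n → K))
    (μ : Fin n → K) (hμ : Function.Injective μ)
    (b : Module.Basis (Fin n) K (Fin n → K)) (hb : ∀ i, f (b i) = μ i • b i) :
    Nat.card {Fl : Fin (n + 1) → Submodule K (Fin n → K) //
      (∀ i : Fin (n + 1), Module.finrank K (Fl i) = (i : ℕ)) ∧ Monotone Fl ∧
      ∀ i, (Fl i).map f ≤ Fl i} = n.factorial := by
  classical
  set V : Finset (Fin n) → Submodule K (Fin n → K) := fun T => span K (b '' ↑T) with hVdef
  have hmemV : ∀ (T : Finset (Fin n)) (k : Fin n), b k ∈ V T ↔ k ∈ T := fun T k =>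
    b.self_mem_span_image.trans Finset.mem_coe
  have hcardfilter : ∀ i : Fin (n + 1),
      (Finset.univ.filter fun j : Fin n => (j : ℕ) < (i : ℕ)).card = (i : ℕ) := by
    intro i
    rw [← Finset.card_range (i : ℕ)]
    apply Finset.card_bij (fun j _ => (j : Fin n).val)
    · intro a ha; simp only [Finset.mem_filter] at ha; simpa using ha.2
    · intro a _ c _ h; exact Fin.val_injective h
    · intro a ha
      simp only [Finset.mem_range] at ha
      have hin : (i : ℕ) ≤ n := by omega
      exact ⟨⟨a, by omega⟩, by simp [ha], rfl⟩
  set FT : Equiv.Perm (Fin n) → Fin (n + 1) → Finset (Fin n) := fun σ i =>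
    Finset.univ.filter fun k => ((σ.symm k : Fin n) : ℕ) < (i : ℕ) with hFTdef
  have hFTcard : ∀ σ i, (FT σ i).card = (i : ℕ) := by
    intro σ i
    have himg : FT σ i = (Finset.univ.filter fun j : Fin n => (j : ℕ) < (i : ℕ)).image σ := by
      ext k
      simp only [hFTdef, Finset.mem_filter, Finset.mem_image, Finset.mem_univ, true_and]
      constructor
      · intro h; exact ⟨σ.symm k, h, σ.apply_symm_apply k⟩
      · rintro ⟨j, hj, rfl⟩; rwa [σ.symm_apply_apply]
    rw [himg, Finset.card_image_of_injective _ σ.injective, hcardfilter]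
  have hd : ∀ (σ : Equiv.Perm (Fin n)) (i : Fin (n + 1)),
      Module.finrank K (V (FT σ i)) = (i : ℕ) := by
    intro σ i
    rw [hVdef, finrank_spanFinset, hFTcard]
  have hm : ∀ σ : Equiv.Perm (Fin n), Monotone fun i => V (FT σ i) := by
    intro σ i j hij
    apply span_mono
    apply Set.image_mono
    intro k hk
    simp only [hFTdef, Finset.coe_filter, Set.mem_setOf_eq, Finset.mem_univ, true_and] at hk ⊢
    have : (i : ℕ) ≤ (j : ℕ) := hij
    omega
  have hs : ∀ (σ : Equiv.Perm (Fin n)) (i : Fin (n + 1)),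
      (V (FT σ i)).map f ≤ V (FT σ i) := fun σ i => map_spanFinset_le b hb _
  set F : Equiv.Perm (Fin n) →
      {Fl : Fin (n + 1) → Submodule K (Fin n → K) //
      (∀ i : Fin (n + 1), Module.finrank K (Fl i) = (i : ℕ)) ∧ Monotone Fl ∧
      ∀ i, (Fl i).map f ≤ Fl i} := fun σ => ⟨fun i => V (FT σ i), hd σ, hm σ, hs σ⟩
    with hFdef
  have hFinj : Function.Injective F := by
    intro σ τ h
    have h2 : ∀ i, V (FT σ i) = V (FT τ i) := fun i => congrFun (congrArg Subtype.val h) i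
    have h3 : ∀ i k, ((σ.symm k : Fin n) : ℕ) < (i : Fin (n+1)).val ↔
        ((τ.symm k : Fin n) : ℕ) < (i : Fin (n+1)).val := by
      intro i k
      have : (k ∈ FT σ i) ↔ k ∈ FT τ i := by rw [← hmemV, ← hmemV, h2]
      simpa [hFTdef] using this
    have hsymm : ∀ k, σ.symm k = τ.symm k := by
      intro k
      have h4 := (h3 ⟨(σ.symm k : ℕ) + 1, by omega⟩ k).mp (by simp)
      have h5 := (h3 ⟨(τ.symm k : ℕ) + 1, by omega⟩ k).mpr (by simp)
      simp only at h4 h5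
      exact Fin.ext (by omega)
    have hst : σ.symm = τ.symm := DFunLike.coe_injective (funext hsymm)
    rw [← σ.symm_symm, hst, τ.symm_symm]
  have hFsurj : Function.Surjective F := by
    rintro ⟨Fl, hdim, hmono, hstab⟩
    set T : Fin (n + 1) → Finset (Fin n) := fun i => Finset.univ.filter fun k => b k ∈ Fl i
      with hTdef
    have hFlT : ∀ i, Fl i = V (T i) := by
      intro i
      rw [stable_eq_span b hμ hb (Fl i) (hstab i), hVdef]
      congr 1
      simp [hTdef]
    have hTcard : ∀ i, (T i).card = (i : ℕ) := by
      intro i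
      have := hdim i
      rw [hFlT i, hVdef, finrank_spanFinset] at this
      exact this
    have hTmono : ∀ {i j : Fin (n + 1)}, i ≤ j → T i ⊆ T j := by
      intro i j hij k hk
      simp only [hTdef, Finset.mem_filter, Finset.mem_univ, true_and] at hk ⊢
      exact hmono hij hk
    have hD : ∀ j : Fin n, ∃ a, T j.succ \ T j.castSucc = {a} := by
      intro j
      rw [← Finset.card_eq_one, Finset.card_sdiff_of_subset (hTmono (by
        rw [Fin.le_def]; simp)), hTcard, hTcard, Fin.val_succ, Fin.coe_castSucc]
      omega
    choose c hc using hD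
    have hcmem : ∀ j : Fin n, c j ∈ T j.succ ∧ c j ∉ T j.castSucc := by
      intro j
      have : c j ∈ T j.succ \ T j.castSucc := by rw [hc j]; exact Finset.mem_singleton_self _
      exact Finset.mem_sdiff.mp this
    have hciff : ∀ (i : Fin (n + 1)) (j : Fin n), c j ∈ T i ↔ (j : ℕ) < (i : ℕ) := by
      intro i j
      constructor
      · intro h
        by_contra hcon
        push_neg at hcon
        exact (hcmem j).2 (hTmono (by rw [Fin.le_def]; simpa using hcon) h)
      · intro h
        exact hTmono (by rw [Fin.le_def]; simpa using h) (hcmem j).1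
    have hcinj : Function.Injective c := by
      intro j k h
      have h1 : c k ∈ T j.succ := h ▸ (hcmem j).1
      have h2 : c j ∈ T k.succ := h.symm ▸ (hcmem k).1
      rw [hciff, Fin.val_succ] at h1 h2
      exact Fin.ext (by omega)
    set σ : Equiv.Perm (Fin n) := Equiv.ofBijective c
      (Finite.injective_iff_bijective.mp hcinj) with hσdef
    refine ⟨σ, ?_⟩
    have hFT : ∀ i, FT σ i = T i := by
      intro i
      ext k
      have hk : c (σ.symm k) = k := σ.apply_symm_apply k
      simp only [hFTdef, Finset.mem_filter, Finset.mem_univ, true_and]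
      rw [← hciff i (σ.symm k), hk]
    apply Subtype.ext
    funext i
    show V (FT σ i) = Fl i
    rw [hFT, hFlT]
  have := Nat.card_eq_of_bijective F ⟨hFinj, hFsurj⟩
  rw [← this, Nat.card_eq_fintype_card, Fintype.card_perm, Fintype.card_fin]
end

section
/- Let W = S_m × S_n act on the torus (K^*)^{m×n} of m×n matrices with nonzero entries by the birational involutions τ^1_α (α = 1,...,m−1) applying the 2-row involution τ (defined via Δ_k and η) to rows α, α+1, and τ^2_β (β = 1,...,n−1) applying the same to columns β, β+1. Then for m = n = 2 the two involutions commute: τ^1_1 ∘ τ^2_1 = τ^2_1 ∘ τ^1_1 as birational maps of (K^*)^{2×2}. -/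
open Matrix

/-- The birational involution `τ` of the 2×2 torus (2-row involution). -/
noncomputable def tauM {K : Type*} [Field K] (t : Matrix (Fin 2) (Fin 2) K) :
    Matrix (Fin 2) (Fin 2) K :=
  !![t 1 0 * (t 0 0 + t 1 1) / (t 0 1 + t 1 0), t 1 1 * (t 0 1 + t 1 0) / (t 0 0 + t 1 1);
     t 0 0 * (t 0 1 + t 1 0) / (t 0 0 + t 1 1), t 0 1 * (t 0 0 + t 1 1) / (t 0 1 + t 1 0)]

/-- The column involution `τ²₁`: the 2-row involution applied to the transpose. -/
noncomputable def tauCol {K : Type*} [Field K] (t : Matrix (Fin 2) (Fin 2) K) :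
    Matrix (Fin 2) (Fin 2) K :=
  (tauM tᵀ)ᵀ

lemma tauM_eq {K : Type*} [Field K] (p q r s : K) :
    tauM !![p, q; r, s] =
      !![r * (p + s) / (q + r), s * (q + r) / (p + s);
         p * (q + r) / (p + s), q * (p + s) / (q + r)] := by
  simp [tauM]

lemma tauCol_eq {K : Type*} [Field K] (p q r s : K) :
    tauCol !![p, q; r, s] =
      !![q * (p + s) / (r + q), p * (r + q) / (p + s);
         s * (r + q) / (p + s), r * (p + s) / (r + q)] := by
  ext i j
  fin_cases i <;> fin_cases j <;> simp [tauCol, tauM]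

lemma main {K : Type*} [Field K] (a b c d : K)
    (hA : a + d ≠ 0) (hB : b + c ≠ 0) :
    tauM (tauCol !![a, b; c, d]) = tauCol (tauM !![a, b; c, d]) := by
  have h1 : tauCol !![a, b; c, d] =
      !![b * (a + d) / (b + c), a * (b + c) / (a + d);
         d * (b + c) / (a + d), c * (a + d) / (b + c)] := by
    rw [tauCol_eq]; ring_nf
  have h2 : tauM !![a, b; c, d] =
      !![c * (a + d) / (b + c), d * (b + c) / (a + d);
         a * (b + c) / (a + d), b * (a + d) / (b + c)] := tauM_eq a b c d
  rw [h1, h2, tauM_eq, tauCol_eq]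
  have e1 : b * (a + d) / (b + c) + c * (a + d) / (b + c) = a + d := by
    field_simp
  have e2 : a * (b + c) / (a + d) + d * (b + c) / (a + d) = b + c := by
    field_simp
  have e3 : d * (b + c) / (a + d) + a * (b + c) / (a + d) = b + c := by
    field_simp; ring
  have e4 : c * (a + d) / (b + c) + b * (a + d) / (b + c) = a + d := by
    field_simp; ring
  simp only [e1, e2, e3, e4]

/-- For `m = n = 2` the row involution `τ¹₁` and the column involution `τ²₁` commute
as birational maps of `(K*)^{2×2}`. -/
theorem stmt15 {K : Type*} [Field K] [CharZero K] (t : Matrix (Fin 2) (Fin 2) K)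
    (h11 : t 0 0 ≠ 0) (h12 : t 0 1 ≠ 0) (h21 : t 1 0 ≠ 0) (h22 : t 1 1 ≠ 0)
    (hA : t 0 0 + t 1 1 ≠ 0) (hB : t 0 1 + t 1 0 ≠ 0) :
    tauM (tauCol t) = tauCol (tauM t) := by
  have ht : t = !![t 0 0, t 0 1; t 1 0, t 1 1] := by
    ext i j; fin_cases i <;> fin_cases j <;> rfl
  rw [ht]
  exact main _ _ _ _ hA hB
end
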